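/- For k ≥ 2 and a ∈ ℂ, the function Ψ_k(z,u) = exp(−a·S_k(z,u)), where S_k(z,u) = (1 − e^{−u(k−1)z^{k−1}})/((k−1)z^{k−1}) with S_k(0,u) = u, is a representation of the Stokes groupoid Sto_k on the trivial line bundle: Ψ_k(g·h) = Ψ_k(g)·Ψ_k(h) for composable g, h, and Ψ_k(z,0) = 1. Moreover, for z ≠ 0, Ψ_k(z,u) = ψ(t(z,u))·ψ(z)^{−1} where ψ(z) = exp(a z^{−(k−1)}/(k−1)). -/

import Mathlib

/-!
Write `n = k - 1`. Away from the pole, `S(z,u) = (z^{-n} - t(z,u)^{-n})/n` because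
`t(z,u)^n = e^{nu z^n} z^n`, so `Ψ = ψ(t)·ψ(z)⁻¹` and `S` is additive along composable arrows by
telescoping, the composite arrow ending at `t(t(z₁,u₁),u₂)`. Over the pole `S(0,u) = u` is plainly
additive, since composition at `z = 0` adds the `u`-coordinates.
-/

open Complex

namespace StokesGroupoid

noncomputable def target (n : ℕ) (z u : ℂ) : ℂ := exp (u * z ^ n) * z

noncomputable def exponent (n : ℕ) (p : ℂ × ℂ) : ℂ :=
  if p.1 = 0 then p.2 else (1 - exp (-p.2 * n * p.1 ^ n)) / (n * p.1 ^ n)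

variable {n : ℕ}

theorem target_pow (n : ℕ) (z u : ℂ) : target n z u ^ n = exp (n * u * z ^ n) * z ^ n := by
  rw [target, mul_pow, ← exp_nat_mul, mul_assoc]

theorem target_comp (n : ℕ) (z₁ u₁ u₂ : ℂ) :
    target n z₁ (u₂ * exp (n * u₁ * z₁ ^ n) + u₁) = target n (target n z₁ u₁) u₂ := by
  conv_rhs => rw [target, target_pow]
  rw [target, target, ← mul_assoc, ← exp_add]
  ring_nf

theorem exponent_zero_right (n : ℕ) (z : ℂ) : exponent n (z, 0) = 0 := by
  simp [exponent]

theorem exponent_of_ne_zero (hn : n ≠ 0) {z : ℂ} (hz : z ≠ 0) (u : ℂ) :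
    exponent n (z, u) = ((z ^ n)⁻¹ - (target n z u ^ n)⁻¹) / n := by
  have hn' : (n : ℂ) ≠ 0 := Nat.cast_ne_zero.mpr hn
  have hzn : z ^ n ≠ 0 := pow_ne_zero n hz
  have hexp : exp (-u * n * z ^ n) = (exp (n * u * z ^ n))⁻¹ := by
    rw [← exp_neg]; ring_nf
  rw [exponent, if_neg hz, target_pow, hexp]
  field_simp

theorem exponent_comp (hn : n ≠ 0) (z₁ u₁ u₂ : ℂ) :
    exponent n (z₁, u₂ * exp (n * u₁ * z₁ ^ n) + u₁) =
      exponent n (target n z₁ u₁, u₂) + exponent n (z₁, u₁) := by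
  by_cases hz₁ : z₁ = 0
  · simp [exponent, target, hz₁, zero_pow hn]
  · have hz₂ : target n z₁ u₁ ≠ 0 := mul_ne_zero (exp_ne_zero _) hz₁
    rw [exponent_of_ne_zero hn hz₁, exponent_of_ne_zero hn hz₂, exponent_of_ne_zero hn hz₁,
      target_comp]
    ring

end StokesGroupoid

open StokesGroupoid in
/-- For `k ≥ 2` and `a ∈ ℂ`, the function `Ψ_k = exp(−a S_k)`, where
`S_k(z,u) = (1 − e^{−u(k−1)z^{k−1}})/((k−1)z^{k−1})` with `S_k(0,u) = u`, is a
representation of the Stokes groupoid `Sto_k` on the trivial line bundle: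
it is multiplicative on composable arrows, equals `1` on identities, and for
`z ≠ 0` it equals `ψ(t(z,u))·ψ(z)⁻¹` for the fundamental solution
`ψ(z) = exp(a z^{−(k−1)}/(k−1))`. -/
theorem stokes_rank_one_representation (k : ℕ) (hk : 2 ≤ k) (a : ℂ) :
    ∀ (S : ℂ × ℂ → ℂ),
      (S = fun p => if p.1 = 0 then p.2
        else (1 - Complex.exp (-p.2 * ((k : ℂ) - 1) * p.1 ^ (k - 1))) /
          (((k : ℂ) - 1) * p.1 ^ (k - 1))) →
    ∀ (Ψ : ℂ × ℂ → ℂ), (Ψ = fun p => Complex.exp (-a * S p)) →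
    ∀ (ψ : ℂ → ℂ), (ψ = fun z => Complex.exp (a * (z ^ (k - 1))⁻¹ / ((k : ℂ) - 1))) →
    -- multiplicativity on composable arrows
    (∀ z₁ u₁ z₂ u₂ : ℂ, z₂ = Complex.exp (u₁ * z₁ ^ (k - 1)) * z₁ →
      Ψ (z₁, u₂ * Complex.exp (((k : ℂ) - 1) * u₁ * z₁ ^ (k - 1)) + u₁) =
        Ψ (z₂, u₂) * Ψ (z₁, u₁)) ∧
    -- identities act trivially
    (∀ z : ℂ, Ψ (z, 0) = 1) ∧
    -- comparison with the fundamental solution away from the pole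
    (∀ z u : ℂ, z ≠ 0 →
      Ψ (z, u) = ψ (Complex.exp (u * z ^ (k - 1)) * z) * (ψ z)⁻¹) := by
  intro S hS Ψ hΨ ψ hψ
  obtain ⟨n, rfl⟩ : ∃ n, k = n + 1 := ⟨k - 1, by omega⟩
  have hn : n ≠ 0 := by omega
  have hcast : ((n + 1 : ℕ) : ℂ) - 1 = n := by push_cast; ring
  simp only [hcast, Nat.add_sub_cancel] at hS hψ ⊢
  obtain rfl : S = exponent n := hS
  subst hΨ hψ
  beta_reduce
  refine ⟨?_, ?_, ?_⟩
  · rintro z₁ u₁ z₂ u₂ rfl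
    rw [exponent_comp hn, mul_add, exp_add]
    rfl
  · intro z
    rw [exponent_zero_right, mul_zero, exp_zero]
  · intro z u hz
    rw [exponent_of_ne_zero hn hz, ← exp_neg, ← exp_add]
    congr 1
    unfold target
    ring
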